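/- Let (M, μ) be a measure space, let H be a separable complex Hilbert space, and let q : M → B(H) be a map such that each q(x) is a rank-one orthogonal projection and q is weakly overcomplete: for all v, w ∈ H the function x ↦ ⟨v, q(x)w⟩ is μ-integrable and ∫_M ⟨v, q(x)w⟩ dμ(x) = ⟨v, w⟩. Then μ(M) is finite if and only if H is finite-dimensional; in that case μ(M) equals the complex dimension of H, and if H is infinite-dimensional then μ(M) = ∞. -/

import Mathlib

/-!
For an orthonormal family `e` and `q x v = ⟪u, v⟫ • u`, the sum `∑ᵢ re ⟪eᵢ, q x eᵢ⟫` equals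
`∑ᵢ ‖⟪eᵢ, u⟫‖²`, which is at most `‖u‖² = 1` by Bessel, with equality for an orthonormal basis
by Parseval. Integrating over `M`, overcompleteness turns each term into `‖eᵢ‖² = 1`, so
`μ(M)` dominates the size of every finite orthonormal family and equals the size of a basis.
In infinite dimension Gram–Schmidt provides orthonormal families of every size. Working with
lower Lebesgue integrals of these nonnegative functions, the comparison with
`μ(M) = ∫⁻ 1` needs no a priori finiteness of `μ`.
-/
open MeasureTheory RCLike
open scoped InnerProductSpace

section

variable {𝕜 E : Type*} [RCLike 𝕜] [NormedAddCommGroup E] [InnerProductSpace 𝕜 E]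

def IsRankOneProjection (P : E →L[𝕜] E) : Prop :=
  ∃ u : E, ‖u‖ = 1 ∧ ∀ v, P v = ⟪u, v⟫_𝕜 • u

lemma re_inner_inner_smul_self (u v : E) : re ⟪v, ⟪u, v⟫_𝕜 • u⟫_𝕜 = ‖⟪v, u⟫_𝕜‖ ^ 2 := by
  rw [inner_smul_right, ← inner_conj_symm v u, RCLike.mul_conj, RCLike.norm_conj]
  norm_cast

namespace IsRankOneProjection

variable {P : E →L[𝕜] E}

lemma re_inner_apply_self_nonneg (hP : IsRankOneProjection P) (v : E) : 0 ≤ re ⟪v, P v⟫_𝕜 := by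
  obtain ⟨u, -, hPu⟩ := hP
  rw [hPu, re_inner_inner_smul_self]
  positivity

lemma sum_re_inner_apply_le_one (hP : IsRankOneProjection P) {ι : Type*} {e : ι → E}
    (he : Orthonormal 𝕜 e) (s : Finset ι) : ∑ i ∈ s, re ⟪e i, P (e i)⟫_𝕜 ≤ 1 := by
  obtain ⟨u, hu, hPu⟩ := hP
  simpa only [hPu, re_inner_inner_smul_self, hu, one_pow] using he.sum_inner_products_le u

lemma sum_re_inner_apply_eq_one (hP : IsRankOneProjection P) {ι : Type*} [Fintype ι]
    (b : OrthonormalBasis ι 𝕜 E) : ∑ i, re ⟪b i, P (b i)⟫_𝕜 = 1 := by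
  obtain ⟨u, hu, hPu⟩ := hP
  simpa only [hPu, re_inner_inner_smul_self, hu, one_pow] using b.sum_sq_norm_inner_right u

end IsRankOneProjection

lemma exists_orthonormal_fin_of_not_finiteDimensional (h : ¬FiniteDimensional 𝕜 E) (n : ℕ) :
    ∃ e : Fin n → E, Orthonormal 𝕜 e := by
  have hn : (n : Cardinal) ≤ Module.rank 𝕜 E :=
    Cardinal.natCast_lt_aleph0.le.trans (not_lt.mp (mt Module.rank_lt_aleph0_iff.mp h))
  obtain ⟨f, hf⟩ := exists_linearIndependent_of_le_rank hn
  exact ⟨InnerProductSpace.gramSchmidtNormed 𝕜 f,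
    InnerProductSpace.gramSchmidtNormed_orthonormal hf⟩

section Overcomplete

variable {M : Type*} [MeasurableSpace M] {μ : Measure M} {q : M → E →L[𝕜] E}

lemma lintegral_ofReal_re_inner_apply_self {v : E} (hpos : ∀ x, 0 ≤ re ⟪v, q x v⟫_𝕜)
    (hint : Integrable (fun x => ⟪v, q x v⟫_𝕜) μ) (hover : ∫ x, ⟪v, q x v⟫_𝕜 ∂μ = ⟪v, v⟫_𝕜) :
    ∫⁻ x, ENNReal.ofReal (re ⟪v, q x v⟫_𝕜) ∂μ = ENNReal.ofReal (‖v‖ ^ 2) := by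
  rw [← ofReal_integral_eq_lintegral_ofReal hint.re (Filter.Eventually.of_forall hpos),
    integral_re hint, hover, inner_self_eq_norm_sq]

lemma lintegral_sum_ofReal_re_inner_apply (hpos : ∀ x v, 0 ≤ re ⟪v, q x v⟫_𝕜)
    (hint : ∀ v, Integrable (fun x => ⟪v, q x v⟫_𝕜) μ)
    (hover : ∀ v, ∫ x, ⟪v, q x v⟫_𝕜 ∂μ = ⟪v, v⟫_𝕜) {ι : Type*} {e : ι → E}
    (he : Orthonormal 𝕜 e) (s : Finset ι) :
    ∫⁻ x, ∑ i ∈ s, ENNReal.ofReal (re ⟪e i, q x (e i)⟫_𝕜) ∂μ = s.card := by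
  rw [lintegral_finsetSum' _ fun i _ =>
    (hint (e i)).re.aestronglyMeasurable.aemeasurable.ennreal_ofReal]
  simp [lintegral_ofReal_re_inner_apply_self (fun x => hpos x _) (hint _) (hover _), he.1]

lemma card_le_measure_univ (hq : ∀ x, IsRankOneProjection (q x))
    (hint : ∀ v, Integrable (fun x => ⟪v, q x v⟫_𝕜) μ)
    (hover : ∀ v, ∫ x, ⟪v, q x v⟫_𝕜 ∂μ = ⟪v, v⟫_𝕜) {ι : Type*} {e : ι → E}
    (he : Orthonormal 𝕜 e) (s : Finset ι) : (s.card : ENNReal) ≤ μ Set.univ := by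
  rw [← lintegral_sum_ofReal_re_inner_apply (fun x => (hq x).re_inner_apply_self_nonneg) hint
    hover he s, ← lintegral_one]
  refine lintegral_mono fun x => ?_
  rw [← ENNReal.ofReal_sum_of_nonneg fun i _ => (hq x).re_inner_apply_self_nonneg _,
    ← ENNReal.ofReal_one]
  exact ENNReal.ofReal_le_ofReal ((hq x).sum_re_inner_apply_le_one he s)

lemma measure_univ_eq_card (hq : ∀ x, IsRankOneProjection (q x))
    (hint : ∀ v, Integrable (fun x => ⟪v, q x v⟫_𝕜) μ)
    (hover : ∀ v, ∫ x, ⟪v, q x v⟫_𝕜 ∂μ = ⟪v, v⟫_𝕜) {ι : Type*} [Fintype ι]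
    (b : OrthonormalBasis ι 𝕜 E) : μ Set.univ = Fintype.card ι := by
  have hsum : ∀ x, ∑ i, ENNReal.ofReal (re ⟪b i, q x (b i)⟫_𝕜) = 1 := fun x => by
    rw [← ENNReal.ofReal_sum_of_nonneg fun i _ => (hq x).re_inner_apply_self_nonneg _,
      (hq x).sum_re_inner_apply_eq_one b, ENNReal.ofReal_one]
  rw [← Finset.card_univ, ← lintegral_sum_ofReal_re_inner_apply
    (fun x => (hq x).re_inner_apply_self_nonneg) hint hover b.orthonormal, lintegral_congr hsum,
    lintegral_one]

lemma measure_univ_eq_top_of_not_finiteDimensional (hq : ∀ x, IsRankOneProjection (q x))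
    (hint : ∀ v, Integrable (fun x => ⟪v, q x v⟫_𝕜) μ)
    (hover : ∀ v, ∫ x, ⟪v, q x v⟫_𝕜 ∂μ = ⟪v, v⟫_𝕜) (h : ¬FiniteDimensional 𝕜 E) :
    μ Set.univ = ⊤ := by
  refine ENNReal.eq_top_of_forall_nnreal_le fun r => ?_
  obtain ⟨n, hn⟩ := exists_nat_gt r
  obtain ⟨e, he⟩ := exists_orthonormal_fin_of_not_finiteDimensional h n
  calc (r : ENNReal) ≤ n := by exact_mod_cast hn.le
    _ = (Finset.univ : Finset (Fin n)).card := by simp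
    _ ≤ μ Set.univ := card_le_measure_univ hq hint hover he _

end Overcomplete

end

theorem measure_univ_eq_dim_of_overcomplete
    {M : Type*} [MeasurableSpace M] (μ : Measure M)
    {H : Type*} [NormedAddCommGroup H] [InnerProductSpace ℂ H]
    (q : M → (H →L[ℂ] H))
    (hq_rank1 : ∀ x, ∃ u : H, ‖u‖ = 1 ∧ ∀ v, q x v = ⟪u, v⟫_ℂ • u)
    (hq_int : ∀ v w : H, Integrable (fun x => ⟪v, q x w⟫_ℂ) μ)
    (hq_over : ∀ v w : H, ∫ x, ⟪v, q x w⟫_ℂ ∂μ = ⟪v, w⟫_ℂ) :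
    (μ Set.univ < ⊤ ↔ FiniteDimensional ℂ H) ∧
    (FiniteDimensional ℂ H → μ Set.univ = (Module.finrank ℂ H : ENNReal)) ∧
    (¬ FiniteDimensional ℂ H → μ Set.univ = ⊤) := by
  have hfin (_ : FiniteDimensional ℂ H) : μ Set.univ = Module.finrank ℂ H := by
    simpa using measure_univ_eq_card hq_rank1 (fun v => hq_int v v) (fun v => hq_over v v)
      (stdOrthonormalBasis ℂ H)
  have hinf : ¬FiniteDimensional ℂ H → μ Set.univ = ⊤ :=
    measure_univ_eq_top_of_not_finiteDimensional hq_rank1 (fun v => hq_int v v)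
      (fun v => hq_over v v)
  refine ⟨⟨fun hlt => ?_, fun h => hfin h ▸ ENNReal.natCast_lt_top _⟩, hfin, hinf⟩
  by_contra h
  exact hlt.ne (hinf h)
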